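/- In the Black-Scholes setting, for fixed S, K, T > 0 and r, q ∈ ℝ, and for every market price c with max(S·exp(−q·T) − K·exp(−r·T), 0) < c < S·exp(−q·T), there exists a unique implied volatility σ > 0 such that C(S,K,T,r,q,σ) = c. -/

import Mathlib

/-!
Write the price in units of the discounted strike as `e^a N(a/v + v/2) - N(a/v - v/2)`, with
`a = log (S / K) + (r - q) T` and total volatility `v = σ √T`. Since `e^a φ(d₁) = φ(d₂)`, its
derivative in `v` is `φ(d₂) > 0`, so the price is strictly increasing in `v`; it tends to the
normalized intrinsic value `max (e^a - 1) 0` as `v → 0⁺` and to `e^a` as `v → ∞`. The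
intermediate value theorem gives existence, and strict monotonicity uniqueness.
-/

open Real

/-- Standard normal density. -/
noncomputable def stdNormalPdf (x : ℝ) : ℝ := Real.exp (-x ^ 2 / 2) / Real.sqrt (2 * Real.pi)

/-- Standard normal cumulative distribution function. -/
noncomputable def stdNormalCdf (x : ℝ) : ℝ := ∫ t in Set.Iic x, stdNormalPdf t

/-- Black-Scholes `d₁`. -/
noncomputable def bsD1 (S K T r q σ : ℝ) : ℝ :=
  (Real.log (S / K) + (r - q + σ ^ 2 / 2) * T) / (σ * Real.sqrt T)

/-- Black-Scholes `d₂`. -/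
noncomputable def bsD2 (S K T r q σ : ℝ) : ℝ := bsD1 S K T r q σ - σ * Real.sqrt T

/-- Black-Scholes call option price. -/
noncomputable def bsCall (S K T r q σ : ℝ) : ℝ :=
  S * Real.exp (-q * T) * stdNormalCdf (bsD1 S K T r q σ) -
    K * Real.exp (-r * T) * stdNormalCdf (bsD2 S K T r q σ)

open MeasureTheory ProbabilityTheory Filter Set Topology

lemma stdNormalPdf_eq_gaussianPDFReal : stdNormalPdf = gaussianPDFReal 0 1 := by
  ext x
  simp [stdNormalPdf, gaussianPDFReal, div_eq_inv_mul]

lemma stdNormalPdf_pos (x : ℝ) : 0 < stdNormalPdf x := by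
  unfold stdNormalPdf
  positivity

lemma continuous_stdNormalPdf : Continuous stdNormalPdf := by
  unfold stdNormalPdf
  fun_prop

lemma stdNormalPdf_sub (x y : ℝ) :
    stdNormalPdf (x - y) = exp (x * y - y ^ 2 / 2) * stdNormalPdf x := by
  simp only [stdNormalPdf, mul_div_assoc', ← exp_add]
  ring_nf

lemma stdNormalCdf_eq_cdf_gaussianReal : stdNormalCdf = cdf (gaussianReal 0 1) := by
  ext x
  rw [cdf_eq_real, measureReal_def, gaussianReal_apply_eq_integral _ one_ne_zero,
    ENNReal.toReal_ofReal (integral_nonneg fun _ ↦ gaussianPDFReal_nonneg _ _ _),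
    stdNormalCdf, stdNormalPdf_eq_gaussianPDFReal]

lemma tendsto_stdNormalCdf_atTop : Tendsto stdNormalCdf atTop (𝓝 1) :=
  stdNormalCdf_eq_cdf_gaussianReal ▸ tendsto_cdf_atTop _

lemma tendsto_stdNormalCdf_atBot : Tendsto stdNormalCdf atBot (𝓝 0) :=
  stdNormalCdf_eq_cdf_gaussianReal ▸ tendsto_cdf_atBot _

lemma hasDerivAt_stdNormalCdf (x : ℝ) : HasDerivAt stdNormalCdf (stdNormalPdf x) x := by
  have hint : Integrable stdNormalPdf :=
    stdNormalPdf_eq_gaussianPDFReal ▸ integrable_gaussianPDFReal 0 1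
  have hcdf : stdNormalCdf = fun y ↦ stdNormalCdf 0 + ∫ t in (0 : ℝ)..y, stdNormalPdf t := by
    ext y
    rw [stdNormalCdf, stdNormalCdf, ← intervalIntegral.integral_Iic_sub_Iic hint.integrableOn
      hint.integrableOn]
    ring
  rw [hcdf]
  exact (intervalIntegral.integral_hasDerivAt_right (continuous_stdNormalPdf.intervalIntegrable _ _)
    (continuous_stdNormalPdf.stronglyMeasurableAtFilter _ _)
    continuous_stdNormalPdf.continuousAt).const_add _

lemma continuous_stdNormalCdf : Continuous stdNormalCdf :=
  continuous_iff_continuousAt.2 fun x ↦ (hasDerivAt_stdNormalCdf x).continuousAt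

/-- The call price in units of the discounted strike `K e^{-rT}`, in terms of the log forward
moneyness `a = log (S / K) + (r - q) T` and the total volatility `v = σ √T`. -/
noncomputable def normalizedCall (a v : ℝ) : ℝ :=
  exp a * stdNormalCdf (a / v + v / 2) - stdNormalCdf (a / v - v / 2)

lemma hasDerivAt_normalizedCall (a : ℝ) {v : ℝ} (hv : v ≠ 0) :
    HasDerivAt (normalizedCall a) (stdNormalPdf (a / v - v / 2)) v := by
  have hdiv : HasDerivAt (fun w ↦ a / w) (-(a / v ^ 2)) v := by
    simpa [div_eq_mul_inv] using (hasDerivAt_inv hv).const_mul a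
  have hhalf : HasDerivAt (fun w : ℝ ↦ w / 2) (1 / 2) v := (hasDerivAt_id v).div_const 2
  have h₁ := (hasDerivAt_stdNormalCdf _).comp v (hdiv.add hhalf)
  have h₂ := (hasDerivAt_stdNormalCdf _).comp v (hdiv.sub hhalf)
  -- The classical `S e^{-qT} φ(d₁) = K e^{-rT} φ(d₂)`; it makes the `a / v²` terms cancel.
  have hpdf : exp a * stdNormalPdf (a / v + v / 2) = stdNormalPdf (a / v - v / 2) := by
    rw [show a / v - v / 2 = a / v + v / 2 - v by ring, stdNormalPdf_sub]
    congr 2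
    field_simp
    ring
  refine ((h₁.const_mul (exp a)).sub h₂).congr_deriv ?_
  linear_combination (-(a / v ^ 2) + 1 / 2) * hpdf

lemma continuousOn_normalizedCall (a : ℝ) : ContinuousOn (normalizedCall a) (Ioi 0) :=
  fun _ hv ↦ (hasDerivAt_normalizedCall a (ne_of_gt hv)).continuousAt.continuousWithinAt

lemma strictMonoOn_normalizedCall (a : ℝ) : StrictMonoOn (normalizedCall a) (Ioi 0) :=
  strictMonoOn_of_hasDerivWithinAt_pos (convex_Ioi 0) (continuousOn_normalizedCall a)
    (fun _ hv ↦ (hasDerivAt_normalizedCall a (ne_of_gt (interior_subset hv))).hasDerivWithinAt)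
    (fun _ _ ↦ stdNormalPdf_pos _)

lemma tendsto_normalizedCall_atTop (a : ℝ) : Tendsto (normalizedCall a) atTop (𝓝 (exp a)) := by
  have hdiv : Tendsto (fun v ↦ a / v) atTop (𝓝 0) := tendsto_const_nhds.div_atTop tendsto_id
  have hhalf : Tendsto (fun v : ℝ ↦ v / 2) atTop atTop := tendsto_id.atTop_div_const two_pos
  have h₁ := tendsto_stdNormalCdf_atTop.comp (hdiv.add_atTop hhalf)
  have h₂ := tendsto_stdNormalCdf_atBot.comp (hdiv.add_atBot (tendsto_neg_atTop_atBot.comp hhalf))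
  unfold normalizedCall
  simpa [Function.comp_def, sub_eq_add_neg] using (h₁.const_mul (exp a)).sub h₂

lemma tendsto_normalizedCall_nhdsGT_zero (a : ℝ) :
    Tendsto (normalizedCall a) (𝓝[>] 0) (𝓝 (max (exp a - 1) 0)) := by
  have hhalf : Tendsto (fun v : ℝ ↦ v / 2) (𝓝[>] 0) (𝓝 0) := by
    simpa using ((continuous_id.div_const (2 : ℝ)).tendsto 0).mono_left nhdsWithin_le_nhds
  have hhalf' : Tendsto (fun v : ℝ ↦ -(v / 2)) (𝓝[>] 0) (𝓝 0) := by simpa using hhalf.neg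
  have hinv : Tendsto (fun v : ℝ ↦ v⁻¹) (𝓝[>] 0) atTop := tendsto_inv_nhdsGT_zero
  unfold normalizedCall
  rcases lt_trichotomy a 0 with ha | rfl | ha
  · have hdiv : Tendsto (fun v ↦ a / v) (𝓝[>] 0) atBot := hinv.const_mul_atTop_of_neg ha
    have h₁ := tendsto_stdNormalCdf_atBot.comp (hdiv.atBot_add hhalf)
    have h₂ := tendsto_stdNormalCdf_atBot.comp (hdiv.atBot_add hhalf')
    rw [max_eq_right (by simpa using ha.le)]
    simpa [Function.comp_def, sub_eq_add_neg] using (h₁.const_mul (exp a)).sub h₂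
  · have hN := continuous_stdNormalCdf.tendsto 0
    simpa [Function.comp_def, sub_eq_add_neg] using (hN.comp hhalf).sub (hN.comp hhalf')
  · have hdiv : Tendsto (fun v ↦ a / v) (𝓝[>] 0) atTop := hinv.const_mul_atTop ha
    have h₁ := tendsto_stdNormalCdf_atTop.comp (hdiv.atTop_add hhalf)
    have h₂ := tendsto_stdNormalCdf_atTop.comp (hdiv.atTop_add hhalf')
    rw [max_eq_left (by simpa using ha.le)]
    simpa [Function.comp_def, sub_eq_add_neg] using (h₁.const_mul (exp a)).sub h₂

theorem normalizedCall_existsUnique (a : ℝ) {y : ℝ} (hlow : max (exp a - 1) 0 < y)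
    (hhigh : y < exp a) : ∃! v, 0 < v ∧ normalizedCall a v = y := by
  obtain ⟨v₁, hv₁y, hv₁⟩ :=
    (((tendsto_normalizedCall_nhdsGT_zero a).eventually_lt_const hlow).and
      self_mem_nhdsWithin).exists
  obtain ⟨v₂, hyv₂, hv₁₂⟩ :=
    (((tendsto_normalizedCall_atTop a).eventually_const_lt hhigh).and
      (eventually_gt_atTop v₁)).exists
  have hsub : Icc v₁ v₂ ⊆ Ioi 0 := fun w hw ↦ lt_of_lt_of_le hv₁ hw.1
  obtain ⟨v, hv, hvy⟩ := intermediate_value_Icc hv₁₂.le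
    ((continuousOn_normalizedCall a).mono hsub) ⟨hv₁y.le, hyv₂.le⟩
  exact ⟨v, ⟨hsub hv, hvy⟩, fun w ⟨hw, hwy⟩ ↦
    (strictMonoOn_normalizedCall a).injOn hw (hsub hv) (hwy.trans hvy.symm)⟩

lemma bsD1_eq_div_add {S K T : ℝ} (r q σ : ℝ) (hT : 0 ≤ T) :
    bsD1 S K T r q σ = (log (S / K) + (r - q) * T) / (σ * √T) + σ * √T / 2 := by
  have hsq : (r - q + σ ^ 2 / 2) * T = (r - q) * T + (σ * √T) ^ 2 / 2 := by
    rw [mul_pow, sq_sqrt hT]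
    ring
  rw [bsD1, hsq, ← add_assoc, add_div, div_right_comm, sq, mul_self_div_self]

lemma spot_eq_discountedStrike_mul_exp {S K : ℝ} (T r q : ℝ) (hS : 0 < S) (hK : 0 < K) :
    S * exp (-q * T) = K * exp (-r * T) * exp (log (S / K) + (r - q) * T) := by
  rw [exp_add, exp_log (div_pos hS hK), mul_mul_mul_comm, mul_div_cancel₀ _ hK.ne', ← exp_add]
  ring_nf

theorem bsCall_eq_mul_normalizedCall {S K T : ℝ} (r q σ : ℝ) (hS : 0 < S) (hK : 0 < K)
    (hT : 0 ≤ T) : bsCall S K T r q σ =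
      K * exp (-r * T) * normalizedCall (log (S / K) + (r - q) * T) (σ * √T) := by
  rw [bsCall, bsD2, bsD1_eq_div_add r q σ hT, spot_eq_discountedStrike_mul_exp T r q hS hK,
    normalizedCall]
  ring_nf

/-- Existence and uniqueness of the Black-Scholes implied volatility: for any
price `c` strictly between the intrinsic value and the discounted spot there
is a unique `σ > 0` with `C(S,K,T,r,q,σ) = c`. -/
theorem bs_implied_vol_exists_unique (S K T r q : ℝ) (hS : 0 < S) (hK : 0 < K)
    (hT : 0 < T) (c : ℝ)
    (hc₁ : max (S * Real.exp (-q * T) - K * Real.exp (-r * T)) 0 < c)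
    (hc₂ : c < S * Real.exp (-q * T)) :
    ∃! σ : ℝ, 0 < σ ∧ bsCall S K T r q σ = c := by
  set a := log (S / K) + (r - q) * T
  set G := K * exp (-r * T)
  have hG : 0 < G := by positivity
  have hsT : 0 < √T := sqrt_pos.2 hT
  rw [spot_eq_discountedStrike_mul_exp T r q hS hK] at hc₁ hc₂
  have hlow : max (exp a - 1) 0 < c / G := by
    rwa [lt_div_iff₀ hG, max_mul_of_nonneg _ _ hG.le, zero_mul, sub_mul, one_mul, mul_comm]
  have hhigh : c / G < exp a := by rwa [div_lt_iff₀ hG, mul_comm]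
  obtain ⟨v, ⟨hv, hvc⟩, huniq⟩ := normalizedCall_existsUnique a hlow hhigh
  refine ⟨v / √T, ⟨div_pos hv hsT, ?_⟩, fun σ ⟨hσ, hσc⟩ ↦ ?_⟩
  · rw [bsCall_eq_mul_normalizedCall r q _ hS hK hT.le, div_mul_cancel₀ _ hsT.ne', hvc,
      mul_div_cancel₀ _ hG.ne']
  · refine eq_div_of_mul_eq hsT.ne' (huniq _ ⟨mul_pos hσ hsT, ?_⟩)
    rw [eq_div_iff hG.ne', mul_comm, ← hσc, bsCall_eq_mul_normalizedCall r q σ hS hK hT.le]
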